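/- Let A be a closed densely defined operator on a Banach space X such that for some K ≥ 1 and θ ∈ [π/2, π), (1 + |z|)‖(A + z)^{-1}‖ ≤ K for all z in the sector S_θ = {z : |arg z| ≤ θ} ∪ {0}. Then for every λ in the sector S_{2θ-π} with λ ≠ 0, the operator A² + λ is invertible with (A² + λ)^{-1} = (A - i√λ)^{-1}(A + i√λ)^{-1}, and there exists K̃ ≥ 1 such that (1 + |λ|)‖(A² + λ)^{-1}‖ ≤ K̃ for all λ ∈ S_{2θ-π}. -/

import Mathlib

/-! For `λ ∈ S_{2θ-π}` the two square roots `μ = ±i√λ` of `-λ` lie in `S_θ`, and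
`A² + λ = (A - μ)(A + μ)`, so `(A² + λ)⁻¹ = (A - μ)⁻¹(A + μ)⁻¹`. Since `‖μ‖² = ‖λ‖` and
`1 + ‖λ‖ ≤ (1 + ‖μ‖)²`, the resolvent bound `K` for `A` gives the bound `K²` for `A²`. -/

variable {X : Type*} [NormedAddCommGroup X] [NormedSpace ℂ X]

/-- A bounded two-sided inverse `R = (A + z)⁻¹` of the (unbounded, partially
defined) operator `A + z`, i.e. `-z` belongs to the resolvent set of `A`. -/
structure IsResolvent (A : X →ₗ.[ℂ] X) (z : ℂ) (R : X →L[ℂ] X) : Prop where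
  mem : ∀ y, R y ∈ A.domain
  right_inv : ∀ y, A ⟨R y, mem y⟩ + z • R y = y
  left_inv : ∀ x : A.domain, R (A x + z • (x : X)) = x

/-- The sector `S_φ = {z ∈ ℂ : |arg z| ≤ φ} ∪ {0}`. -/
def Sector (φ : ℝ) : Set ℂ := {z | z = 0 ∨ |Complex.arg z| ≤ φ}

namespace IsResolvent

variable {A : X →ₗ.[ℂ] X} {z μ lam : ℂ} {R R' Rm Rp : X →L[ℂ] X}

lemma apply_eq (h : IsResolvent A z R) (y : X) : A ⟨R y, h.mem y⟩ = y - z • R y :=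
  eq_sub_of_add_eq (h.right_inv y)

lemma unique (h : IsResolvent A z R) (h' : IsResolvent A z R') : R = R' := by
  ext y
  simpa only [h.right_inv y] using (h'.left_inv ⟨R y, h.mem y⟩).symm

lemma comp_right_inv (hμ : μ ^ 2 = -lam) (hRm : IsResolvent A (-μ) Rm)
    (hRp : IsResolvent A μ Rp) (y : X) :
    ∃ h1 : Rm (Rp y) ∈ A.domain, ∃ h2 : A ⟨Rm (Rp y), h1⟩ ∈ A.domain,
      A ⟨A ⟨Rm (Rp y), h1⟩, h2⟩ + lam • Rm (Rp y) = y := by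
  set u : A.domain := ⟨Rp y, hRp.mem y⟩
  set v : A.domain := ⟨Rm (Rp y), hRm.mem (Rp y)⟩
  have hAv : A v = (u + μ • v : A.domain) := by
    rw [hRm.apply_eq, neg_smul, sub_neg_eq_add]
    rfl
  have hAv_mem : A v ∈ A.domain := hAv ▸ (u + μ • v).2
  refine ⟨v.2, hAv_mem, ?_⟩
  have hAAv : A ⟨A v, hAv_mem⟩ = y - μ • (u : X) + μ • A v := by
    rw [show (⟨A v, hAv_mem⟩ : A.domain) = u + μ • v from Subtype.ext hAv, A.map_add,
      A.map_smul, hRp.apply_eq]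
  rw [hAAv, hAv, Submodule.coe_add, Submodule.coe_smul, smul_add, smul_smul, ← sq, hμ]
  module

lemma comp_left_inv (hμ : μ ^ 2 = -lam) (hRm : IsResolvent A (-μ) Rm)
    (hRp : IsResolvent A μ Rp) (x : A.domain) (hx : A x ∈ A.domain) :
    Rm (Rp (A ⟨A x, hx⟩ + lam • (x : X))) = x := by
  set w : A.domain := ⟨A x, hx⟩ + (-μ) • x
  have hw : A ⟨A x, hx⟩ + lam • (x : X) = A w + μ • (w : X) := by
    rw [A.map_add, A.map_smul, Submodule.coe_add, Submodule.coe_smul, smul_add, smul_smul,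
      mul_neg, ← sq, hμ, neg_neg]
    module
  rw [hw, hRp.left_inv w]
  exact hRm.left_inv x

end IsResolvent

lemma norm_comp_le_sq_of_mul_norm_le {𝕜 E F G : Type*} [NontriviallyNormedField 𝕜]
    [SeminormedAddCommGroup E] [SeminormedAddCommGroup F] [SeminormedAddCommGroup G]
    [NormedSpace 𝕜 E] [NormedSpace 𝕜 F] [NormedSpace 𝕜 G]
    {S : F →L[𝕜] G} {T : E →L[𝕜] F} {s K : ℝ} (hs : 0 ≤ s)
    (hS : (1 + s) * ‖S‖ ≤ K) (hT : (1 + s) * ‖T‖ ≤ K) :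
    (1 + s ^ 2) * ‖S.comp T‖ ≤ K ^ 2 :=
  calc (1 + s ^ 2) * ‖S.comp T‖
      ≤ (1 + s) ^ 2 * (‖S‖ * ‖T‖) :=
        mul_le_mul (by nlinarith) (S.opNorm_comp_le T) (norm_nonneg _) (by positivity)
    _ = ((1 + s) * ‖S‖) * ((1 + s) * ‖T‖) := by ring
    _ ≤ K ^ 2 := by
        rw [sq]
        exact mul_le_mul hS hT (by positivity) ((by positivity : (0 : ℝ) ≤ _).trans hS)

lemma arg_exp_mul_I_mul_cpow_half {lam : ℂ} (hlam : lam ≠ 0) {t : ℝ}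
    (ht : |t| ≤ Real.pi / 2) :
    Complex.arg (Complex.exp (t * Complex.I) * lam ^ (1 / 2 : ℂ)) = lam.arg / 2 + t := by
  have him : (t * Complex.I + Complex.log lam * (1 / 2)).im = lam.arg / 2 + t := by
    simp [Complex.log_im, add_comm, div_eq_mul_inv]
  have hbounds := abs_le.mp ht
  rw [Complex.cpow_def_of_ne_zero hlam, ← Complex.exp_add, ← Complex.log_im,
    Complex.log_exp, him] <;>
  linarith [Complex.neg_pi_lt_arg lam, Complex.arg_le_pi lam]

lemma exp_mul_I_mul_cpow_half_mem_sector {θ : ℝ} {lam : ℂ}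
    (hlam : lam ∈ Sector (2 * θ - Real.pi)) {t : ℝ} (ht : |t| ≤ Real.pi / 2) :
    Complex.exp (t * Complex.I) * lam ^ (1 / 2 : ℂ) ∈ Sector θ := by
  rcases eq_or_ne lam 0 with rfl | hlam0
  · left
    simp [Complex.zero_cpow]
  · right
    have harg := hlam.resolve_left hlam0
    rw [arg_exp_mul_I_mul_cpow_half hlam0 ht]
    exact (abs_add_le _ _).trans (by rw [abs_div, abs_two]; linarith)

theorem stmt5_general (A : X →ₗ.[ℂ] X)
    (K θ : ℝ) (hK : 1 ≤ K)
    (hres : ∀ z ∈ Sector θ, ∃ R : X →L[ℂ] X,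
      IsResolvent A z R ∧ (1 + ‖z‖) * ‖R‖ ≤ K) :
    ∃ Ktilde : ℝ, 1 ≤ Ktilde ∧
      ∀ lam ∈ Sector (2 * θ - Real.pi), lam ≠ 0 →
        (∃ Rm Rp : X →L[ℂ] X,
          IsResolvent A (-(Complex.I * lam ^ (1/2 : ℂ))) Rm ∧
          IsResolvent A (Complex.I * lam ^ (1/2 : ℂ)) Rp) ∧
        ∀ Rm Rp : X →L[ℂ] X,
          IsResolvent A (-(Complex.I * lam ^ (1/2 : ℂ))) Rm →
          IsResolvent A (Complex.I * lam ^ (1/2 : ℂ)) Rp →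
          (∀ y : X, ∃ h1 : Rm (Rp y) ∈ A.domain,
            ∃ h2 : A ⟨Rm (Rp y), h1⟩ ∈ A.domain,
              A ⟨A ⟨Rm (Rp y), h1⟩, h2⟩ + lam • Rm (Rp y) = y) ∧
          (∀ x : A.domain, ∀ hx : A x ∈ A.domain,
            Rm (Rp (A ⟨A x, hx⟩ + lam • (x : X))) = x) ∧
          (1 + ‖lam‖) * ‖Rm.comp Rp‖ ≤ Ktilde := by
  refine ⟨K ^ 2, one_le_pow₀ hK, fun lam hlam _ ↦ ?_⟩
  set μ := Complex.I * lam ^ (1 / 2 : ℂ)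
  have hμ : μ ^ 2 = -lam := by
    rw [mul_pow, Complex.I_sq, one_div, Complex.cpow_ofNat_inv_pow, neg_one_mul]
  have hμ_mem : μ ∈ Sector θ := by
    have h := exp_mul_I_mul_cpow_half_mem_sector hlam (t := Real.pi / 2)
      (abs_of_pos (by positivity)).le
    rwa [Complex.ofReal_div, Complex.ofReal_ofNat, Complex.exp_pi_div_two_mul_I] at h
  have hnegμ_mem : -μ ∈ Sector θ := by
    have h := exp_mul_I_mul_cpow_half_mem_sector hlam (t := -Real.pi / 2)
      (by rw [neg_div, abs_neg, abs_of_pos (by positivity)])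
    rwa [Complex.ofReal_div, Complex.ofReal_neg, Complex.ofReal_ofNat,
      Complex.exp_neg_pi_div_two_mul_I, neg_mul] at h
  obtain ⟨Rm, hRm, hRm_le⟩ := hres (-μ) hnegμ_mem
  obtain ⟨Rp, hRp, hRp_le⟩ := hres μ hμ_mem
  refine ⟨⟨Rm, Rp, hRm, hRp⟩, fun Rm' Rp' hRm' hRp' ↦ ?_⟩
  obtain rfl := hRm'.unique hRm
  obtain rfl := hRp'.unique hRp
  refine ⟨hRm'.comp_right_inv hμ hRp', hRm'.comp_left_inv hμ hRp', ?_⟩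
  have hnorm : ‖μ‖ ^ 2 = ‖lam‖ := by rw [← norm_pow, hμ, norm_neg]
  rw [norm_neg] at hRm_le
  rw [← hnorm]
  exact norm_comp_le_sq_of_mul_norm_le (norm_nonneg μ) hRm_le hRp_le

/-- Lemma 3.5, resolvent part: let `A` be a closed densely
defined operator on a complex Banach space `X` such that for some `K ≥ 1`
and `θ ∈ [π/2, π)`, `(1 + |z|)‖(A + z)⁻¹‖ ≤ K` for all `z ∈ S_θ`.  Then for
every `0 ≠ λ ∈ S_{2θ-π}` the operator `A² + λ` is invertible with
`(A² + λ)⁻¹ = (A - i√λ)⁻¹(A + i√λ)⁻¹` (principal square root), and there is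
`K̃ ≥ 1` with `(1 + |λ|)‖(A² + λ)⁻¹‖ ≤ K̃` for all `λ ∈ S_{2θ-π}`, i.e.
`A ∈ P(θ)`, `θ ≥ π/2`, implies `A² ∈ P(2θ - π)`. -/
theorem stmt5 (A : X →ₗ.[ℂ] X)
    (hclosed : IsClosed (A.graph : Set (X × X)))
    (hdense : Dense (A.domain : Set X))
    (K θ : ℝ) (hK : 1 ≤ K) (hθ1 : Real.pi / 2 ≤ θ) (hθ2 : θ < Real.pi)
    (hres : ∀ z ∈ Sector θ, ∃ R : X →L[ℂ] X,
      IsResolvent A z R ∧ (1 + ‖z‖) * ‖R‖ ≤ K) :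
    ∃ Ktilde : ℝ, 1 ≤ Ktilde ∧
      ∀ lam ∈ Sector (2 * θ - Real.pi), lam ≠ 0 →
        (∃ Rm Rp : X →L[ℂ] X,
          IsResolvent A (-(Complex.I * lam ^ (1/2 : ℂ))) Rm ∧
          IsResolvent A (Complex.I * lam ^ (1/2 : ℂ)) Rp) ∧
        ∀ Rm Rp : X →L[ℂ] X,
          IsResolvent A (-(Complex.I * lam ^ (1/2 : ℂ))) Rm →
          IsResolvent A (Complex.I * lam ^ (1/2 : ℂ)) Rp →
          (∀ y : X, ∃ h1 : Rm (Rp y) ∈ A.domain,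
            ∃ h2 : A ⟨Rm (Rp y), h1⟩ ∈ A.domain,
              A ⟨A ⟨Rm (Rp y), h1⟩, h2⟩ + lam • Rm (Rp y) = y) ∧
          (∀ x : A.domain, ∀ hx : A x ∈ A.domain,
            Rm (Rp (A ⟨A x, hx⟩ + lam • (x : X))) = x) ∧
          (1 + ‖lam‖) * ‖Rm.comp Rp‖ ≤ Ktilde :=
  stmt5_general A K θ hK hres
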